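/- arXiv:1301.7462 — 4 statements merged into one kernel-verified Lean document; each statement's English description precedes it below -/
import Mathlib

section
/- Let V be a type, E : V → V → Prop a directed edge relation, c : V → V → ℝ, s : V, dist : V → ℝ, and num : V → ℕ∞ (naturals extended with ∞). Assume: (1) dist(s) = 0; (2) justification: for every vertex v with v ≠ s and num(v) ≠ ∞ there exists u with E u v, dist(v) = dist(u) + c(u, v), and num(v) = num(u) + 1; (3) for every u ≠ s with num(u) ≠ ∞, num(u) ≠ 0. Then for every vertex v with num(v) ≠ ∞ there exists a walk s = v₀, v₁, …, v_k = v with E v_i v_{i+1} for all 0 ≤ i < k whose cost Σ_{i<k} c(v_i, v_{i+1}) equals dist(v). In particular dist(v) is at least the shortest-path distance from s to v. -/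
/-!
Following justifying edges backwards from `v` lowers `num` by one at each step, so the chain
reaches `s` after finitely many steps; read forwards it is a walk from `s` whose cost telescopes
to `dist v - dist s = dist v`.
-/

open Finset

section Walks

variable {V : Type*} (E : V → V → Prop) (c : V → V → ℝ)

theorem exists_walk_snoc {k : ℕ} {p : ℕ → V} {v : V}
    (hp : ∀ i < k, E (p i) (p (i + 1))) (hv : E (p k) v) :
    ∃ q : ℕ → V, q 0 = p 0 ∧ q (k + 1) = v ∧ (∀ i < k + 1, E (q i) (q (i + 1))) ∧
      ∑ i ∈ range (k + 1), c (q i) (q (i + 1)) =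
        ∑ i ∈ range k, c (p i) (p (i + 1)) + c (p k) v := by
  have hq : ∀ i ≤ k, Function.update p (k + 1) v i = p i := fun i hi =>
    Function.update_of_ne (by omega) _ _
  refine ⟨Function.update p (k + 1) v, hq 0 (Nat.zero_le k), Function.update_self .., ?_, ?_⟩
  · intro i hi
    rcases Nat.lt_succ_iff_lt_or_eq.mp hi with hik | rfl
    · rw [hq i hik.le, hq (i + 1) hik]
      exact hp i hik
    · rwa [hq i le_rfl, Function.update_self]
  · rw [sum_range_succ, hq k le_rfl, Function.update_self]
    congr 1
    refine sum_congr rfl fun i hi => ?_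
    rw [mem_range] at hi
    rw [hq i hi.le, hq (i + 1) hi]

theorem exists_walk_of_justified {s : V} {dist : V → ℝ} {num : V → ℕ∞} (hs : dist s = 0)
    (just : ∀ v : V, v ≠ s → num v ≠ ⊤ →
      ∃ u : V, E u v ∧ dist v = dist u + c u v ∧ num v = num u + 1)
    (n : ℕ) (v : V) (hv : num v = n) :
    ∃ (k : ℕ) (p : ℕ → V),
      p 0 = s ∧ p k = v ∧ (∀ i < k, E (p i) (p (i + 1))) ∧
      ∑ i ∈ range k, c (p i) (p (i + 1)) = dist v := by
  induction n using Nat.strong_induction_on generalizing v with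
  | _ n ih =>
    by_cases hvs : v = s
    · exact ⟨0, fun _ => s, rfl, hvs.symm, by simp, by simp [hvs, hs]⟩
    obtain ⟨u, huv, hdist, hnum⟩ := just v hvs (hv ▸ ENat.natCast_ne_top n)
    rw [hv] at hnum
    obtain ⟨m, hm⟩ : ∃ m : ℕ, (m : ℕ∞) = num u := ENat.ne_top_iff_exists.mp fun h => by
      simp [h] at hnum
    rw [← hm] at hnum
    have hmn : n = m + 1 := by exact_mod_cast hnum
    obtain ⟨k, p, hp0, hpk, hp, hcost⟩ := ih m (by omega) u hm.symm
    obtain ⟨q, hq0, hqk, hq, hqcost⟩ := exists_walk_snoc E c hp (hpk ▸ huv)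
    exact ⟨k + 1, q, hq0.trans hp0, hqk, hq, by rw [hqcost, hcost, hpk, hdist]⟩

end Walks

theorem dist_ge_mu_witness_general {V : Type*}
    (E : V → V → Prop) (c : V → V → ℝ) (s : V)
    (dist : V → ℝ) (num : V → ℕ∞)
    (hs : dist s = 0)
    (just : ∀ v : V, v ≠ s → num v ≠ ⊤ →
      ∃ u : V, E u v ∧ dist v = dist u + c u v ∧ num v = num u + 1) :
    ∀ v : V, num v ≠ ⊤ →
      ∃ (k : ℕ) (p : ℕ → V),
        p 0 = s ∧ p k = v ∧ (∀ i < k, E (p i) (p (i + 1))) ∧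
        ∑ i ∈ Finset.range k, c (p i) (p (i + 1)) = dist v := by
  intro v hv
  obtain ⟨n, hn⟩ := WithTop.ne_top_iff_exists.mp hv
  exact exists_walk_of_justified E c hs just n v hn.symm

theorem dist_ge_mu_witness {V : Type*}
    (E : V → V → Prop) (c : V → V → ℝ) (s : V)
    (dist : V → ℝ) (num : V → ℕ∞)
    (hs : dist s = 0)
    (just : ∀ v : V, v ≠ s → num v ≠ ⊤ →
      ∃ u : V, E u v ∧ dist v = dist u + c u v ∧ num v = num u + 1)
    (hnum : ∀ u : V, u ≠ s → num u ≠ ⊤ → num u ≠ 0) :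
    ∀ v : V, num v ≠ ⊤ →
      ∃ (k : ℕ) (p : ℕ → V),
        p 0 = s ∧ p k = v ∧ (∀ i < k, E (p i) (p (i + 1))) ∧
        ∑ i ∈ Finset.range k, c (p i) (p (i + 1)) = dist v :=
  dist_ge_mu_witness_general E c s dist num hs just
end

section
/- Let V be a type, E : V → V → Prop a directed edge relation, c : V → V → ℝ with c(u, v) ≥ 0 whenever E u v, s : V, dist : V → EReal, and num : V → ℕ∞. Assume: (1) dist(s) = 0; (2) consistency: for every v, dist(v) = +∞ if and only if num(v) = ∞; (3) triangle inequality: for all u, v with E u v, dist(v) ≤ dist(u) + c(u, v); (4) justification: for every v with v ≠ s and num(v) ≠ ∞ there exists u with E u v, dist(v) = dist(u) + c(u, v), and num(v) = num(u) + 1. Then for every vertex v: (a) dist(v) ≠ +∞ if and only if there exists a walk from s to v; (b) for every walk from s to v, its cost is at least dist(v); and (c) if dist(v) ≠ +∞, there exists a walk from s to v whose cost equals dist(v). Hence dist(v) is exactly the shortest-path distance from s to v (and +∞ for unreachable v). -/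
/-!
The triangle inequality telescopes along any walk from `s`, so `dist` is a lower bound for the
cost of every walk. Conversely, the justifying parent edges strictly decrease the finite depth
`num`, so following them from a vertex of depth `n` reaches `s` in `n` steps, and since `dist` is
tight on each parent edge the resulting walk costs exactly `dist v`.
-/

open Finset

section Walks

variable {V : Type*}

def IsWalkFrom (E : V → V → Prop) (s v : V) (k : ℕ) (p : ℕ → V) : Prop :=
  p 0 = s ∧ p k = v ∧ ∀ i < k, E (p i) (p (i + 1))

def walkCost (c : V → V → ℝ) (k : ℕ) (p : ℕ → V) : ℝ :=
  ∑ i ∈ range k, c (p i) (p (i + 1))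

theorem walkCost_update_succ (c : V → V → ℝ) (k : ℕ) (p : ℕ → V) (v : V) :
    walkCost c (k + 1) (Function.update p (k + 1) v) = walkCost c k p + c (p k) v := by
  rw [walkCost, sum_range_succ, walkCost]
  congr 1
  · refine sum_congr rfl fun i hi => ?_
    have hik := mem_range.mp hi
    rw [Function.update_of_ne (by omega), Function.update_of_ne (by omega)]
  · rw [Function.update_of_ne (by omega), Function.update_self]

theorem IsWalkFrom.update_succ {E : V → V → Prop} {s u v : V} {k : ℕ} {p : ℕ → V}
    (hp : IsWalkFrom E s u k p) (huv : E u v) :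
    IsWalkFrom E s v (k + 1) (Function.update p (k + 1) v) := by
  obtain ⟨hp0, hpk, hpE⟩ := hp
  refine ⟨by rw [Function.update_of_ne (by omega), hp0], Function.update_self ..,
    fun i hi => ?_⟩
  rw [Function.update_of_ne (by omega)]
  rcases Nat.lt_succ_iff_lt_or_eq.mp hi with hik | rfl
  · rw [Function.update_of_ne (by omega)]
    exact hpE i hik
  · rw [Function.update_self, hpk]
    exact huv

theorem le_add_walkCost {E : V → V → Prop} {c : V → V → ℝ} {d : V → EReal}
    (trian : ∀ u v : V, E u v → d v ≤ d u + (c u v : EReal)) {k : ℕ} {p : ℕ → V}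
    (hp : ∀ i < k, E (p i) (p (i + 1))) :
    d (p k) ≤ d (p 0) + (walkCost c k p : EReal) := by
  induction k with
  | zero => simp [walkCost]
  | succ k ih =>
    calc d (p (k + 1)) ≤ d (p k) + (c (p k) (p (k + 1)) : EReal) :=
          trian _ _ (hp k k.lt_succ_self)
      _ ≤ d (p 0) + (walkCost c k p : EReal) + (c (p k) (p (k + 1)) : EReal) := by
          gcongr
          exact ih fun i hi => hp i (Nat.lt_succ_of_lt hi)
      _ = d (p 0) + (walkCost c (k + 1) p : EReal) := by
          simp only [walkCost, sum_range_succ, EReal.coe_add, add_assoc]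

theorem exists_walk_of_num_eq {E : V → V → Prop} {c : V → V → ℝ} {s : V}
    {dist : V → EReal} {num : V → ℕ∞} (hs : dist s = 0)
    (just : ∀ v : V, v ≠ s → num v ≠ ⊤ →
      ∃ u : V, E u v ∧ dist v = dist u + (c u v : EReal) ∧ num v = num u + 1)
    (n : ℕ) (v : V) (hv : num v = n) :
    ∃ (k : ℕ) (p : ℕ → V), IsWalkFrom E s v k p ∧ dist v = walkCost c k p := by
  induction n using Nat.strong_induction_on generalizing v with
  | _ n ih =>
    by_cases hvs : v = s
    · exact ⟨0, fun _ => v, ⟨hvs, rfl, fun i hi => absurd hi i.not_lt_zero⟩,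
        by simp [hvs, hs, walkCost]⟩
    obtain ⟨u, huv, hdist, hnum⟩ := just v hvs (by simp [hv])
    rw [hv] at hnum
    have hu : num u ≠ ⊤ := by rintro h; simp [h] at hnum
    lift num u to ℕ using hu with m hm
    have hmn : n = m + 1 := by exact_mod_cast hnum
    obtain ⟨k, p, hp, hcost⟩ := ih m (by omega) u hm.symm
    refine ⟨k + 1, _, hp.update_succ huv, ?_⟩
    rw [walkCost_update_succ, hdist, hcost, EReal.coe_add, hp.2.1]

end Walks

theorem shortest_path_witness_property_general {V : Type*}
    (E : V → V → Prop) (c : V → V → ℝ) (s : V)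
    (dist : V → EReal) (num : V → ℕ∞)
    (hs : dist s = 0)
    (no_path : ∀ v : V, dist v = ⊤ ↔ num v = ⊤)
    (trian : ∀ u v : V, E u v → dist v ≤ dist u + (c u v : EReal))
    (just : ∀ v : V, v ≠ s → num v ≠ ⊤ →
      ∃ u : V, E u v ∧ dist v = dist u + (c u v : EReal) ∧ num v = num u + 1) :
    ∀ v : V,
      (dist v ≠ ⊤ ↔
        ∃ (k : ℕ) (p : ℕ → V),
          p 0 = s ∧ p k = v ∧ ∀ i < k, E (p i) (p (i + 1))) ∧
      (∀ (k : ℕ) (p : ℕ → V),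
        p 0 = s → p k = v → (∀ i < k, E (p i) (p (i + 1))) →
        dist v ≤ ((∑ i ∈ Finset.range k, c (p i) (p (i + 1)) : ℝ) : EReal)) ∧
      (dist v ≠ ⊤ →
        ∃ (k : ℕ) (p : ℕ → V),
          p 0 = s ∧ p k = v ∧ (∀ i < k, E (p i) (p (i + 1))) ∧
          dist v = ((∑ i ∈ Finset.range k, c (p i) (p (i + 1)) : ℝ) : EReal)) := by
  intro v
  have lower : ∀ k p, IsWalkFrom E s v k p → dist v ≤ (walkCost c k p : EReal) := by
    rintro k p ⟨hp0, rfl, hpE⟩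
    simpa [hp0, hs] using le_add_walkCost trian hpE
  have upper : dist v ≠ ⊤ → ∃ k p, IsWalkFrom E s v k p ∧ dist v = walkCost c k p := by
    intro hv
    obtain ⟨n, hn⟩ := ENat.ne_top_iff_exists.mp (mt (no_path v).mpr hv)
    exact exists_walk_of_num_eq hs just n v hn.symm
  refine ⟨⟨fun hv => ?_, fun ⟨k, p, hp⟩ => ?_⟩,
    fun k p h0 hk hE => lower k p ⟨h0, hk, hE⟩, fun hv => ?_⟩
  · obtain ⟨k, p, hp, -⟩ := upper hv
    exact ⟨k, p, hp⟩
  · exact ne_top_of_le_ne_top (EReal.coe_ne_top _) (lower k p hp)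
  · obtain ⟨k, p, ⟨hp0, hpk, hpE⟩, hcost⟩ := upper hv
    exact ⟨k, p, hp0, hpk, hpE, hcost⟩

theorem shortest_path_witness_property {V : Type*}
    (E : V → V → Prop) (c : V → V → ℝ) (s : V)
    (dist : V → EReal) (num : V → ℕ∞)
    (hc : ∀ u v : V, E u v → 0 ≤ c u v)
    (hs : dist s = 0)
    (no_path : ∀ v : V, dist v = ⊤ ↔ num v = ⊤)
    (trian : ∀ u v : V, E u v → dist v ≤ dist u + (c u v : EReal))
    (just : ∀ v : V, v ≠ s → num v ≠ ⊤ →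
      ∃ u : V, E u v ∧ dist v = dist u + (c u v : EReal) ∧ num v = num u + 1) :
    ∀ v : V,
      (dist v ≠ ⊤ ↔
        ∃ (k : ℕ) (p : ℕ → V),
          p 0 = s ∧ p k = v ∧ ∀ i < k, E (p i) (p (i + 1))) ∧
      (∀ (k : ℕ) (p : ℕ → V),
        p 0 = s → p k = v → (∀ i < k, E (p i) (p (i + 1))) →
        dist v ≤ ((∑ i ∈ Finset.range k, c (p i) (p (i + 1)) : ℝ) : EReal)) ∧
      (dist v ≠ ⊤ →
        ∃ (k : ℕ) (p : ℕ → V),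
          p 0 = s ∧ p k = v ∧ (∀ i < k, E (p i) (p (i + 1))) ∧
          dist v = ((∑ i ∈ Finset.range k, c (p i) (p (i + 1)) : ℝ) : EReal)) :=
  shortest_path_witness_property_general E c s dist num hs no_path trian just
end

section
/- Let G be a simple graph on a finite vertex type V and let L : V → ℕ be an odd-set cover of G, i.e., for every edge {u, v} of G either L(u) = 1, or L(v) = 1, or L(u) = L(v) and L(u) ≥ 2. For each i ≥ 0 let n_i denote the number of vertices v with L(v) = i. Then every matching N of G satisfies |N| ≤ n₁ + Σ_{i≥2} ⌊n_i / 2⌋ (the sum taken over all labels i ≥ 2 occurring as values of L). -/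
/-!
Every matching edge either meets a vertex labelled `1` or, by the cover condition, has both
endpoints labelled by the same `i ≥ 2`. Since matching edges are vertex-disjoint, the edges of the
first kind inject into the vertices labelled `1`, and the edges of the second kind with label `i`
use up two vertices labelled `i` each, so there are at most `⌊n_i / 2⌋` of them.
-/

open Finset

namespace Sym2

variable {V : Type*}

def VertexDisjoint (N : Finset (Sym2 V)) : Prop :=
  ∀ e₁ ∈ N, ∀ e₂ ∈ N, e₁ ≠ e₂ → ∀ v : V, ¬ (v ∈ e₁ ∧ v ∈ e₂)

namespace VertexDisjoint

variable {N T : Finset (Sym2 V)}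

theorem mono (hN : VertexDisjoint N) (hT : T ⊆ N) : VertexDisjoint T :=
  fun e₁ h₁ e₂ h₂ => hN e₁ (hT h₁) e₂ (hT h₂)

variable [DecidableEq V]

theorem card_mul_le_card (hN : VertexDisjoint N) (S : Finset V) {m : ℕ}
    (hm : ∀ e ∈ N, m ≤ #{v ∈ S | v ∈ e}) : #N * m ≤ #S := by
  have hle := card_mul_le_card_mul (fun e v => v ∈ e) hm (n := 1) fun v _ =>
    card_le_one.2 fun e₁ h₁ e₂ h₂ => by
      rw [mem_bipartiteBelow] at h₁ h₂
      by_contra hne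
      exact hN e₁ h₁.1 e₂ h₂.1 hne v ⟨h₁.2, h₂.2⟩
  rwa [mul_one] at hle

theorem card_le_card_of_forall_exists_mem (hN : VertexDisjoint N) (S : Finset V)
    (hS : ∀ e ∈ N, ∃ v ∈ e, v ∈ S) : #N ≤ #S := by
  have hle := hN.card_mul_le_card S (m := 1) fun e he => by
    obtain ⟨v, hve, hvS⟩ := hS e he
    exact card_pos.2 ⟨v, mem_filter.2 ⟨hvS, hve⟩⟩
  rwa [mul_one] at hle

theorem card_mul_two_le_card (hN : VertexDisjoint N) (S : Finset V)
    (hdiag : ∀ e ∈ N, ¬ e.IsDiag) (hS : ∀ e ∈ N, ∀ v ∈ e, v ∈ S) : #N * 2 ≤ #S :=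
  hN.card_mul_le_card S fun e he => by
    rw [← card_toFinset_of_not_isDiag e (hdiag e he)]
    exact card_le_card fun v hv => mem_filter.2 ⟨hS e he v (mem_toFinset.1 hv), mem_toFinset.1 hv⟩

end VertexDisjoint

end Sym2

open Sym2

theorem exists_label_eq_one_or_forall_label_eq {V : Type*} {G : SimpleGraph V} {L : V → ℕ}
    (hosc : ∀ u v : V, G.Adj u v → L u = 1 ∨ L v = 1 ∨ (L u = L v ∧ 2 ≤ L u))
    {e : Sym2 V} (he : e ∈ G.edgeSet) :
    (∃ v ∈ e, L v = 1) ∨ ∃ u ∈ e, 2 ≤ L u ∧ ∀ v ∈ e, L v = L u := by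
  induction e using Sym2.ind with
  | h u w =>
    rcases hosc u w he with hu | hw | ⟨huw, h2⟩
    · exact .inl ⟨u, mem_mk_left u w, hu⟩
    · exact .inl ⟨w, mem_mk_right u w, hw⟩
    · refine .inr ⟨u, mem_mk_left u w, h2, fun v hv => ?_⟩
      rcases mem_iff.1 hv with rfl | rfl
      exacts [rfl, huw.symm]

theorem odd_set_cover_bound_general {V : Type*} [Fintype V]
    (G : SimpleGraph V) [DecidableRel G.Adj]
    (L : V → ℕ)
    (hosc : ∀ u v : V, G.Adj u v →
      L u = 1 ∨ L v = 1 ∨ (L u = L v ∧ 2 ≤ L u))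
    (n : ℕ → ℕ) (hn : ∀ i, n i = (Finset.univ.filter (fun v => L v = i)).card)
    (N : Finset (Sym2 V))
    (hsub : N ⊆ G.edgeFinset)
    (hmatch : ∀ e₁ ∈ N, ∀ e₂ ∈ N, e₁ ≠ e₂ → ∀ v : V, ¬ (v ∈ e₁ ∧ v ∈ e₂)) :
    N.card ≤ n 1 + ∑ i ∈ (Finset.univ.image L).filter (fun i => 2 ≤ i), n i / 2 := by
  classical
  have hN : VertexDisjoint N := hmatch
  set A := N.filter fun e => ∃ v ∈ e, L v = 1
  set B : ℕ → Finset (Sym2 V) := fun i => N.filter fun e => ∀ v ∈ e, L v = i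
  set labels := (univ.image L).filter fun i => 2 ≤ i
  have hcover : N ⊆ A ∪ labels.biUnion B := by
    intro e he
    rcases exists_label_eq_one_or_forall_label_eq hosc (G.mem_edgeFinset.1 (hsub he)) with
      h1 | ⟨u, -, h2, hu⟩
    · exact mem_union_left _ (mem_filter.2 ⟨he, h1⟩)
    · exact mem_union_right _ (mem_biUnion.2
        ⟨L u, mem_filter.2 ⟨mem_image_of_mem L (mem_univ u), h2⟩, mem_filter.2 ⟨he, hu⟩⟩)
  have hA : #A ≤ n 1 := by
    rw [hn]
    exact (hN.mono (filter_subset _ _)).card_le_card_of_forall_exists_mem _ fun e he => by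
      obtain ⟨v, hv, h1⟩ := (mem_filter.1 he).2
      exact ⟨v, hv, mem_filter.2 ⟨mem_univ v, h1⟩⟩
  have hB : ∀ i, #(B i) ≤ n i / 2 := fun i => by
    rw [hn, Nat.le_div_iff_mul_le two_pos]
    exact (hN.mono (filter_subset _ _)).card_mul_two_le_card _
      (fun e he => G.not_isDiag_of_mem_edgeFinset (hsub (mem_filter.1 he).1))
      fun e he v hv => mem_filter.2 ⟨mem_univ v, (mem_filter.1 he).2 v hv⟩
  calc #N ≤ #A + #(labels.biUnion B) := (card_le_card hcover).trans (card_union_le _ _)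
    _ ≤ #A + ∑ i ∈ labels, #(B i) := by gcongr; exact card_biUnion_le
    _ ≤ n 1 + ∑ i ∈ labels, n i / 2 := add_le_add hA (sum_le_sum fun i _ => hB i)

theorem odd_set_cover_bound {V : Type*} [Fintype V] [DecidableEq V]
    (G : SimpleGraph V) [DecidableRel G.Adj]
    (L : V → ℕ)
    (hosc : ∀ u v : V, G.Adj u v →
      L u = 1 ∨ L v = 1 ∨ (L u = L v ∧ 2 ≤ L u))
    (n : ℕ → ℕ) (hn : ∀ i, n i = (Finset.univ.filter (fun v => L v = i)).card)
    (N : Finset (Sym2 V))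
    (hsub : N ⊆ G.edgeFinset)
    (hmatch : ∀ e₁ ∈ N, ∀ e₂ ∈ N, e₁ ≠ e₂ → ∀ v : V, ¬ (v ∈ e₁ ∧ v ∈ e₂)) :
    N.card ≤ n 1 + ∑ i ∈ (Finset.univ.image L).filter (fun i => 2 ≤ i), n i / 2 :=
  odd_set_cover_bound_general G L hosc n hn N hsub hmatch
end

section
/- (Edmonds) Let G be a simple graph on a finite vertex type V, let M be a matching in G, and let L : V → ℕ be an odd-set cover of G, i.e., for every edge {u, v} of G either L(u) = 1, or L(v) = 1, or L(u) = L(v) and L(u) ≥ 2. For each i ≥ 0 let n_i denote the number of vertices v with L(v) = i. If |M| = n₁ + Σ_{i≥2} ⌊n_i / 2⌋ (the sum taken over all labels i ≥ 2 occurring as values of L), then M is a maximum cardinality matching of G: every matching N of G satisfies |N| ≤ |M|. -/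
/-!
Every edge of a matching `N` either contains a vertex labelled `1`, and distinct such edges
contain distinct such vertices, so there are at most `n₁` of them; or both of its endpoints
carry the same label `i ≥ 2`, and the edges of this second kind inside class `i` are disjoint
pairs of vertices of that class, so there are at most `⌊nᵢ / 2⌋` of them. Hence every matching
has at most `n₁ + ∑_{i ≥ 2} ⌊nᵢ / 2⌋ = |M|` edges.
-/

open Finset

section

variable {V : Type*}

def VertexDisjoint (N : Finset (Sym2 V)) : Prop :=
  ∀ e₁ ∈ N, ∀ e₂ ∈ N, e₁ ≠ e₂ → ∀ v : V, ¬ (v ∈ e₁ ∧ v ∈ e₂)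

namespace VertexDisjoint

variable {N N' : Finset (Sym2 V)}

theorem mono (hN : VertexDisjoint N) (h : N' ⊆ N) : VertexDisjoint N' :=
  fun e₁ h₁ e₂ h₂ => hN e₁ (h h₁) e₂ (h h₂)

theorem card_le_of_forall_exists_mem (hN : VertexDisjoint N) {S : Finset V}
    (hS : ∀ e ∈ N, ∃ v ∈ S, v ∈ e) : #N ≤ #S := by
  obtain rfl | ⟨e, -⟩ := N.eq_empty_or_nonempty
  · simp
  have : Nonempty V := ⟨e.out.1⟩
  choose! f hfS hfe using hS
  refine card_le_card_of_injOn f hfS fun e₁ h₁ e₂ h₂ heq => ?_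
  by_contra hne
  exact hN e₁ h₁ e₂ h₂ hne _ ⟨hfe e₁ h₁, heq ▸ hfe e₂ h₂⟩

theorem two_mul_card_le_of_forall_mem [DecidableEq V] (hN : VertexDisjoint N)
    (hdiag : ∀ e ∈ N, ¬ e.IsDiag) {S : Finset V} (hS : ∀ e ∈ N, ∀ v ∈ e, v ∈ S) :
    2 * #N ≤ #S := by
  have hdisj : (N : Set (Sym2 V)).PairwiseDisjoint Sym2.toFinset :=
    fun e₁ h₁ e₂ h₂ hne => disjoint_left.2 fun v hv₁ hv₂ =>
      hN e₁ h₁ e₂ h₂ hne v ⟨Sym2.mem_toFinset.1 hv₁, Sym2.mem_toFinset.1 hv₂⟩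
  calc 2 * #N = ∑ e ∈ N, #e.toFinset := by
        rw [sum_congr rfl fun e he => Sym2.card_toFinset_of_not_isDiag e (hdiag e he),
          sum_const, smul_eq_mul, mul_comm]
    _ = #(N.biUnion Sym2.toFinset) := (card_biUnion hdisj).symm
    _ ≤ #S := card_le_card <| biUnion_subset.2 fun e he v hv => hS e he v (Sym2.mem_toFinset.1 hv)

theorem card_le_of_labelling [Fintype V] [DecidableEq V] (hN : VertexDisjoint N)
    (hdiag : ∀ e ∈ N, ¬ e.IsDiag) (L : V → ℕ)
    (hL : ∀ e ∈ N, (∃ v ∈ e, L v = 1) ∨ ∃ i, 2 ≤ i ∧ ∀ v ∈ e, L v = i) :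
    #N ≤ #{v | L v = 1} + ∑ i ∈ (univ.image L).filter (fun i => 2 ≤ i), #{v | L v = i} / 2 := by
  set I := (univ.image L).filter (fun i => 2 ≤ i)
  set classEdges : ℕ → Finset (Sym2 V) := fun i => N.filter fun e => ∀ v ∈ e, L v = i
  have hcover : N ⊆ N.filter (fun e => ∃ v ∈ e, L v = 1) ∪ I.biUnion classEdges := by
    intro e he
    rcases hL e he with h1 | ⟨i, hi, hall⟩
    · exact mem_union_left _ (mem_filter.2 ⟨he, h1⟩)
    · have hiI : i ∈ I := mem_filter.2 ⟨mem_image.2 ⟨_, mem_univ _, hall _ e.out_fst_mem⟩, hi⟩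
      exact mem_union_right _ (mem_biUnion.2 ⟨i, hiI, mem_filter.2 ⟨he, hall⟩⟩)
  have hone : #(N.filter fun e => ∃ v ∈ e, L v = 1) ≤ #{v | L v = 1} :=
    (hN.mono (filter_subset _ _)).card_le_of_forall_exists_mem fun e he =>
      let ⟨v, hve, hv⟩ := (mem_filter.1 he).2
      ⟨v, mem_filter.2 ⟨mem_univ _, hv⟩, hve⟩
  have hclass : ∀ i, #(classEdges i) ≤ #{v | L v = i} / 2 := fun i =>
    (Nat.le_div_iff_mul_le two_pos).2 <| by
      rw [mul_comm]
      exact (hN.mono (filter_subset _ _)).two_mul_card_le_of_forall_mem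
        (fun e he => hdiag e (mem_of_mem_filter e he))
        fun e he v hv => mem_filter.2 ⟨mem_univ _, (mem_filter.1 he).2 v hv⟩
  calc #N ≤ _ := card_le_card hcover
    _ ≤ _ := card_union_le _ _
    _ ≤ _ := add_le_add hone (card_biUnion_le.trans (sum_le_sum fun i _ => hclass i))

end VertexDisjoint

theorem SimpleGraph.label_one_or_monochromatic_of_mem_edgeSet {G : SimpleGraph V} {L : V → ℕ}
    (hosc : ∀ u v : V, G.Adj u v → L u = 1 ∨ L v = 1 ∨ (L u = L v ∧ 2 ≤ L u))
    {e : Sym2 V} (he : e ∈ G.edgeSet) :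
    (∃ v ∈ e, L v = 1) ∨ ∃ i, 2 ≤ i ∧ ∀ v ∈ e, L v = i := by
  induction e using Sym2.ind with
  | h u v =>
    rcases hosc u v he with hu | hv | ⟨heq, h2⟩
    · exact .inl ⟨u, Sym2.mem_mk_left u v, hu⟩
    · exact .inl ⟨v, Sym2.mem_mk_right u v, hv⟩
    · exact .inr ⟨L u, h2, fun w hw => by rcases Sym2.mem_iff.1 hw with rfl | rfl <;> simp [heq]⟩

end

theorem edmonds_witness_property_general {V : Type*} [Fintype V] [DecidableEq V]
    (G : SimpleGraph V) [DecidableRel G.Adj]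
    (L : V → ℕ)
    (hosc : ∀ u v : V, G.Adj u v →
      L u = 1 ∨ L v = 1 ∨ (L u = L v ∧ 2 ≤ L u))
    (n : ℕ → ℕ) (hn : ∀ i, n i = (Finset.univ.filter (fun v => L v = i)).card)
    (M : Finset (Sym2 V))
    (hcard : M.card = n 1 + ∑ i ∈ (Finset.univ.image L).filter (fun i => 2 ≤ i), n i / 2) :
    ∀ N : Finset (Sym2 V),
      N ⊆ G.edgeFinset →
      (∀ e₁ ∈ N, ∀ e₂ ∈ N, e₁ ≠ e₂ → ∀ v : V, ¬ (v ∈ e₁ ∧ v ∈ e₂)) →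
      N.card ≤ M.card := by
  intro N hNG hN
  have hedge : ∀ e ∈ N, e ∈ G.edgeSet := fun e he => G.mem_edgeFinset.1 (hNG he)
  simp only [hcard, hn]
  exact VertexDisjoint.card_le_of_labelling hN
    (fun e he => G.not_isDiag_of_mem_edgeSet (hedge e he)) L
    fun e he => G.label_one_or_monochromatic_of_mem_edgeSet hosc (hedge e he)

theorem edmonds_witness_property {V : Type*} [Fintype V] [DecidableEq V]
    (G : SimpleGraph V) [DecidableRel G.Adj]
    (L : V → ℕ)
    (hosc : ∀ u v : V, G.Adj u v →
      L u = 1 ∨ L v = 1 ∨ (L u = L v ∧ 2 ≤ L u))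
    (n : ℕ → ℕ) (hn : ∀ i, n i = (Finset.univ.filter (fun v => L v = i)).card)
    (M : Finset (Sym2 V))
    (hMsub : M ⊆ G.edgeFinset)
    (hMmatch : ∀ e₁ ∈ M, ∀ e₂ ∈ M, e₁ ≠ e₂ → ∀ v : V, ¬ (v ∈ e₁ ∧ v ∈ e₂))
    (hcard : M.card = n 1 + ∑ i ∈ (Finset.univ.image L).filter (fun i => 2 ≤ i), n i / 2) :
    ∀ N : Finset (Sym2 V),
      N ⊆ G.edgeFinset →
      (∀ e₁ ∈ N, ∀ e₂ ∈ N, e₁ ≠ e₂ → ∀ v : V, ¬ (v ∈ e₁ ∧ v ∈ e₂)) →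
      N.card ≤ M.card :=
  edmonds_witness_property_general G L hosc n hn M hcard
end
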